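/- arXiv:1806.01843 — 4 statements merged into one kernel-verified Lean document; each statement's English description precedes it below -/
import Mathlib

section
/- For all integers l ≥ 1 and i with 1 ≤ i ≤ l, one has ((2l - 2i + 1)/(2l - i + 1)) · C(2l, i) + ((2l - 2i + 3)/(2l - i + 2)) · C(2l, i-1) = ((2l - 2i + 2)/(2l - i + 2)) · C(2l+1, i). -/
/-- For integers `l ≥ 1` and `1 ≤ i ≤ l`,
`((2l-2i+1)/(2l-i+1))·C(2l,i) + ((2l-2i+3)/(2l-i+2))·C(2l,i-1) = ((2l-2i+2)/(2l-i+2))·C(2l+1,i)`. -/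
theorem stmt_2 (l i : ℕ) (hl : 1 ≤ l) (hi1 : 1 ≤ i) (hi2 : i ≤ l) :
    ((2 * (l : ℚ) - 2 * i + 1) / (2 * (l : ℚ) - i + 1)) * (Nat.choose (2 * l) i : ℚ)
      + ((2 * (l : ℚ) - 2 * i + 3) / (2 * (l : ℚ) - i + 2)) * (Nat.choose (2 * l) (i - 1) : ℚ)
    = ((2 * (l : ℚ) - 2 * i + 2) / (2 * (l : ℚ) - i + 2)) * (Nat.choose (2 * l + 1) i : ℚ) := by
  have hkeyN : (2 * l).choose i * i = (2 * l).choose (i - 1) * (2 * l - i + 1) := by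
    have h := Nat.choose_succ_right_eq (2 * l) (i - 1)
    have hi : i - 1 + 1 = i := by omega
    have h2 : 2 * l - (i - 1) = 2 * l - i + 1 := by omega
    rw [hi, h2] at h
    exact h
  have key : (Nat.choose (2 * l) i : ℚ) * i
      = (Nat.choose (2 * l) (i - 1) : ℚ) * (2 * (l : ℚ) - i + 1) := by
    have := congrArg (Nat.cast : ℕ → ℚ) hkeyN
    push_cast [Nat.sub_add_cancel, (by omega : i ≤ 2 * l)] at this
    rw [this]
  have pascalN : (2 * l + 1).choose i = (2 * l).choose (i - 1) + (2 * l).choose i := by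
    have h := Nat.choose_succ_succ (2 * l) (i - 1)
    have hi : i - 1 + 1 = i := by omega
    simp only [Nat.succ_eq_add_one, hi] at h
    exact h
  have pascal : (Nat.choose (2 * l + 1) i : ℚ)
      = (Nat.choose (2 * l) (i - 1) : ℚ) + (Nat.choose (2 * l) i : ℚ) := by
    exact_mod_cast congrArg (Nat.cast : ℕ → ℚ) pascalN
  have hiQ : (1 : ℚ) ≤ (i : ℚ) := by exact_mod_cast hi1
  have hilQ : (i : ℚ) ≤ (l : ℚ) := by exact_mod_cast hi2
  have h1 : 2 * (l : ℚ) - i + 1 ≠ 0 := by nlinarith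
  have h2 : 2 * (l : ℚ) - i + 2 ≠ 0 := by nlinarith
  have hiQ0 : (i : ℚ) ≠ 0 := by positivity
  rw [pascal]
  field_simp
  nlinarith [key, mul_pos (lt_of_lt_of_le one_pos hiQ) (lt_of_lt_of_le one_pos hiQ)]
end

section
/- Let R = ℤ[χ, y] and let P_m ∈ R be defined by P_1 = 1, P_2 = y, P_m = y·P_{m-1} − χ·P_{m-2}. Then for every m ≥ 0, y^m = Σ_{i=0}^{⌊m/2⌋} ((m - 2i + 1)/(m - i + 1)) · C(m, i) · χ^i · P_{m+1-2i} in R. -/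
open MvPolynomial Finset

/-- Ballot coefficients, defined recursively. -/
def bb : ℕ → ℕ → ℤ
  | 0, 0 => 1
  | 0, _+1 => 0
  | _+1, 0 => 1
  | m+1, j+1 => bb m (j+1) + (if 2*j+1 ≤ m then bb m j else 0)

lemma bb_succ_succ (m j : ℕ) :
    bb (m+1) (j+1) = bb m (j+1) + (if 2*j+1 ≤ m then bb m j else 0) := rfl

lemma bb_left_zero : ∀ m, bb m 0 = 1 := by
  intro m; cases m <;> rfl

lemma bb_zero : ∀ {m i : ℕ}, m < 2*i → bb m i = 0 := by
  intro m
  induction m with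
  | zero => rintro (_|i) h; · omega
            rfl
  | succ m ih =>
    rintro (_|j) h
    · omega
    · rw [bb_succ_succ, ih (by omega), if_neg (by omega)]
      ring

/-- Closed form. -/
def BB (m j : ℕ) : ℤ := (m.choose j : ℤ) - (if j = 0 then 0 else m.choose (j-1))

lemma BB_zero (m : ℕ) : BB m 0 = 1 := by simp [BB]

lemma BB_succ (m j : ℕ) : BB m (j+1) = (m.choose (j+1) : ℤ) - m.choose j := by
  simp [BB]

lemma pascal (n k : ℕ) : (((n+1).choose (k+1) : ℕ) : ℤ) = n.choose k + n.choose (k+1) := by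
  rw [Nat.choose_succ_succ]
  push_cast
  ring

lemma pascal' (n k : ℕ) : (((n+1).choose (k+1) : ℕ) : ℚ) = n.choose k + n.choose (k+1) := by
  rw [Nat.choose_succ_succ]
  push_cast
  ring

lemma bb_eq_BB : ∀ {m i : ℕ}, 2*i ≤ m → bb m i = BB m i := by
  intro m
  induction m with
  | zero => rintro (_|i) h; · simp [bb, BB]
            omega
  | succ m ih =>
    rintro (_|j) h
    · simp [bb, BB]
    · rw [bb_succ_succ]
      rcases lt_or_ge m (2*(j+1)) with hlt | hge
      · have hm : m = 2*j+1 := by omega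
        rw [bb_zero hlt, if_pos (by omega), ih (by omega), zero_add, BB_succ]
        subst hm
        rw [show 2*j+1+1 = 2*(j+1) from by ring]
        cases j with
        | zero => simp [BB]
        | succ k =>
          rw [BB_succ, show 2*(k+1+1) = (2*(k+1)+1)+1 from by ring,
            show k+1+1 = (k+1)+1 from rfl,
            pascal (2*(k+1)+1) (k+1), pascal (2*(k+1)+1) k,
            show (2*(k+1)+1 : ℕ) = 2*(k+1)+1 from rfl]
          have := Nat.choose_symm_half (k+1)
          push_cast [this]
          ring_nf
      · rw [ih (by omega), if_pos (by omega), ih (by omega), BB_succ, BB_succ,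
          pascal m j]
        cases j with
        | zero => rw [BB_zero]
                  simp
        | succ k => rw [BB_succ, pascal m k]
                    ring

lemma BB_formula {m i : ℕ} (h : 2*i ≤ m) :
    ((BB m i : ℤ) : ℚ) = (((m : ℚ) - 2 * i + 1) / ((m : ℚ) - i + 1)) * (Nat.choose m i : ℚ) := by
  have him : (i : ℚ) ≤ m := by exact_mod_cast (by omega : i ≤ m)
  have hm : (m : ℚ) - i + 1 ≠ 0 := by nlinarith [him]
  rw [div_mul_eq_mul_div, eq_div_iff hm]
  cases i with
  | zero => simp [BB]
  | succ j =>
    have hj : j ≤ m := by omega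
    have key : (m.choose (j+1) : ℚ) * (j+1) = m.choose j * ((m:ℚ) - j) := by
      have := congrArg (Nat.cast : ℕ → ℚ) (Nat.choose_succ_right_eq m j)
      push_cast [Nat.cast_sub hj] at this
      linarith [this]
    rw [BB_succ]
    push_cast
    push_cast at key
    ring_nf
    ring_nf at key
    linarith [key]

lemma main_id (P : ℕ → MvPolynomial (Fin 2) ℤ)
    (hP1 : P 1 = 1) (hP2 : P 2 = X 1)
    (hrec : ∀ m, 3 ≤ m → P m = X 1 * P (m - 1) - X 0 * P (m - 2)) :
    ∀ m, (X 1 : MvPolynomial (Fin 2) ℤ) ^ m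
      = ∑ i ∈ range (m+1), bb m i • (X 0 ^ i * P (m+1-2*i)) := by
  intro m
  induction m with
  | zero => simp [bb, hP1]
  | succ m ih =>
    have key : ∀ i, (bb m i • ((X 0 : MvPolynomial (Fin 2) ℤ)^i * P (m+1-2*i))) * X 1
        = bb m i • (X 0^i * P (m+2-2*i))
          + (if 2*i+1 ≤ m then bb m i else 0) • (X 0^(i+1) * P (m+2-2*(i+1))) := by
      intro i
      rcases lt_or_ge m (2*i) with hlt | hge
      · rw [bb_zero hlt, if_neg (by omega)]
        simp
      · rcases eq_or_lt_of_le hge with heq | hlt2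
        · rw [if_neg (by omega), show m+1-2*i = 1 from by omega,
            show m+2-2*i = 2 from by omega, hP1, hP2]
          simp only [smul_mul_assoc, mul_one, zero_smul, add_zero]
        · have h3 : 3 ≤ m+2-2*i := by omega
          have hr := hrec (m+2-2*i) h3
          rw [show m+2-2*i-1 = m+1-2*i from by omega,
            show m+2-2*i-2 = m-2*i from by omega] at hr
          have hx : (X 1 : MvPolynomial (Fin 2) ℤ) * P (m+1-2*i)
              = P (m+2-2*i) + X 0 * P (m-2*i) := by
            rw [hr]; ring
          rw [if_pos (by omega), show m+2-2*(i+1) = m-2*i from by omega,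
            smul_mul_assoc, mul_assoc, mul_comm (P (m+1-2*i)) (X 1), hx, mul_add, smul_add]
          congr 1
          rw [pow_succ]
          ring_nf
    rw [pow_succ, ih, Finset.sum_mul, Finset.sum_congr rfl (fun i _ => key i),
      Finset.sum_add_distrib]
    have hfirst : ∑ i ∈ range (m+1), bb m i • ((X 0 : MvPolynomial (Fin 2) ℤ)^i * P (m+2-2*i))
        = ∑ i ∈ range (m+1),
            bb m (i+1) • ((X 0 : MvPolynomial (Fin 2) ℤ)^(i+1) * P (m+2-2*(i+1)))
          + bb m 0 • ((X 0 : MvPolynomial (Fin 2) ℤ)^0 * P (m+2-2*0)) := by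
      rw [← Finset.sum_range_succ' (fun k => bb m k •
        ((X 0 : MvPolynomial (Fin 2) ℤ)^k * P (m+2-2*k))) (m+1)]
      rw [Finset.sum_range_succ _ (m+1), bb_zero (by omega : m < 2*(m+1))]
      simp
    rw [hfirst]
    rw [show range (m+1+1) = range (m+2) from rfl]
    rw [Finset.sum_range_succ' (fun j => bb (m+1) j •
      ((X 0 : MvPolynomial (Fin 2) ℤ)^j * P (m+1+1-2*j))) (m+1)]
    rw [add_right_comm, ← Finset.sum_add_distrib]
    congr 1
    · apply Finset.sum_congr rfl
      intro i _
      rw [bb_succ_succ, add_smul]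
    · simp [bb_left_zero]

/-- In `R = ℤ[χ, y]` (with `χ = X 0`, `y = X 1`), with `P` defined by
`P 1 = 1`, `P 2 = y`, `P m = y·P (m-1) − χ·P (m-2)`, for every `m ≥ 0`
`y^m = Σ_{i=0}^{⌊m/2⌋} ((m-2i+1)/(m-i+1))·C(m,i) · χ^i · P (m+1-2i)`,
where the (integer) ballot coefficients `c i` are specified by their value in `ℚ`. -/
theorem stmt_5 (P : ℕ → MvPolynomial (Fin 2) ℤ)
    (hP1 : P 1 = 1) (hP2 : P 2 = X 1)
    (hrec : ∀ m, 3 ≤ m → P m = X 1 * P (m - 1) - X 0 * P (m - 2)) :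
    ∀ (m : ℕ) (c : ℕ → ℤ),
      (∀ i, i ≤ m / 2 →
        (c i : ℚ) = (((m : ℚ) - 2 * i + 1) / ((m : ℚ) - i + 1)) * (Nat.choose m i : ℚ)) →
      (X 1 : MvPolynomial (Fin 2) ℤ) ^ m
        = ∑ i ∈ range (m / 2 + 1), c i • (X 0 ^ i * P (m + 1 - 2 * i)) := by
  intro m c hmq
  have hc : ∀ i ∈ range (m/2+1),
      c i • ((X 0 : MvPolynomial (Fin 2) ℤ)^i * P (m+1-2*i))
        = bb m i • ((X 0 : MvPolynomial (Fin 2) ℤ)^i * P (m+1-2*i)) := by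
    intro i hi
    have h2 : 2*i ≤ m := by have := mem_range.mp hi; omega
    have h1 := hmq i (by omega)
    have h2' := BB_formula h2
    rw [← bb_eq_BB h2] at h2'
    have hcb : c i = bb m i := by exact_mod_cast h1.trans h2'.symm
    rw [hcb]
  rw [Finset.sum_congr rfl hc, main_id P hP1 hP2 hrec m]
  symm
  apply Finset.sum_subset
  · intro x hx
    simp only [mem_range] at hx ⊢
    omega
  · intro x hx hnx
    simp only [mem_range] at hx hnx
    rw [bb_zero (by omega), zero_smul]
end

section
/- Let k be an algebraically closed field of characteristic zero, t ≥ 1, β ∈ k with β ≠ 0, and α ∈ k with α ≠ 0. Let A be the t×t companion matrix of (y − β)^t and let C be the 2t×2t block matrix [[A, 0], [αA, A]]. Then C is similar to J_{t-1}(β) ⊕ J_{t+1}(β), the direct sum of Jordan blocks of sizes t−1 and t+1 with eigenvalue β. -/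
open Polynomial Matrix

namespace Stmt8Aux

variable {k : Type*} [Field k]

lemma sum_deltaNat {n : ℕ} (c : ℕ) (f : Fin n → k) :
    (∑ l : Fin n, if (l : ℕ) = c then f l else 0) = if h : c < n then f (Fin.mk c h) else 0 := by
  by_cases h : c < n
  · rw [dif_pos h]
    have h1 : (∑ l : Fin n, if (l : ℕ) = c then f l else 0)
        = ∑ l : Fin n, if l = Fin.mk c h then f l else 0 :=
      Finset.sum_congr rfl fun l _ => if_congr (by simp [Fin.ext_iff]) rfl rfl
    rw [h1, Finset.sum_ite_eq' _ (Fin.mk c h)]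
    simp
  · rw [dif_neg h]
    apply Finset.sum_eq_zero
    intro l _
    rw [if_neg]
    omega

/-- Jordan block of size `n` with eigenvalue `β` (ones on the subdiagonal). -/
def Jm (k : Type*) [Field k] (n : ℕ) (β : k) : Matrix (Fin n) (Fin n) k :=
  Matrix.of fun i j => if i = j then β else if (i : ℕ) = (j : ℕ) + 1 then 1 else 0

lemma Jmul_apply {m' : Type*} {n : ℕ} (β : k) (X : Matrix (Fin n) m' k) (i : Fin n) (c : m') :
    (Jm k n β * X) i c
      = β * X i c + (if h : 1 ≤ (i : ℕ) then
          X ⟨(i : ℕ) - 1, Nat.lt_of_le_of_lt (Nat.sub_le _ _) i.isLt⟩ c else 0) := by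
  rw [Matrix.mul_apply]
  have key : ∀ l : Fin n, Jm k n β i l * X l c
      = (if (l : ℕ) = (i : ℕ) then β * X l c else 0)
        + (if (l : ℕ) + 1 = (i : ℕ) then X l c else 0) := by
    intro l
    simp only [Jm, Matrix.of_apply, Fin.ext_iff]
    split_ifs <;> first | ring1 | (exfalso; omega)
  rw [Finset.sum_congr rfl fun l _ => key l, Finset.sum_add_distrib]
  by_cases h : 1 ≤ (i : ℕ)
  · have h2 : (∑ l : Fin n, if (l : ℕ) + 1 = (i : ℕ) then X l c else 0)
        = ∑ l : Fin n, if (l : ℕ) = (i : ℕ) - 1 then X l c else 0 :=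
      Finset.sum_congr rfl fun l _ => if_congr (by omega) rfl rfl
    rw [h2, sum_deltaNat, sum_deltaNat]
    rw [dif_pos i.isLt, dif_pos (Nat.lt_of_le_of_lt (Nat.sub_le _ _) i.isLt), dif_pos h]
  · rw [dif_neg h, sum_deltaNat, dif_pos i.isLt]
    have h2 : ∀ l : Fin n, (if (l : ℕ) + 1 = (i : ℕ) then X l c else 0) = 0 := by
      intro l; rw [if_neg]; omega
    rw [Finset.sum_congr rfl fun l _ => h2 l]
    simp

lemma mul_J_apply {m' : Type*} {n : ℕ} (β : k) (X : Matrix m' (Fin n) k) (r : m') (j : Fin n) :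
    (X * Jm k n β) r j
      = β * X r j + (if h : (j : ℕ) + 1 < n then X r ⟨(j : ℕ) + 1, h⟩ else 0) := by
  rw [Matrix.mul_apply]
  have key : ∀ l : Fin n, X r l * Jm k n β l j
      = (if (l : ℕ) = (j : ℕ) then β * X r l else 0)
        + (if (l : ℕ) = (j : ℕ) + 1 then X r l else 0) := by
    intro l
    simp only [Jm, Matrix.of_apply, Fin.ext_iff]
    split_ifs <;> first | ring1 | (exfalso; omega)
  rw [Finset.sum_congr rfl fun l _ => key l, Finset.sum_add_distrib, sum_deltaNat, sum_deltaNat]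
  rw [dif_pos j.isLt]

/-- Change of basis matrix: column `n` holds the coefficients of `(X - β)^n`. -/
noncomputable def Sm (k : Type*) [Field k] (t : ℕ) (β : k) : Matrix (Fin t) (Fin t) k :=
  Matrix.of fun i n => ((X - C β) ^ (n : ℕ)).coeff (i : ℕ)

lemma coeff_step (β : k) (n i : ℕ) :
    ((X - C β) ^ (n + 1)).coeff i
      = (if 1 ≤ i then ((X - C β) ^ n).coeff (i - 1) else 0)
        - β * ((X - C β) ^ n).coeff i := by
  rw [pow_succ', sub_mul, coeff_sub, coeff_C_mul]
  congr 1
  cases i with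
  | zero => simp
  | succ m => rw [coeff_X_mul]; simp

lemma Sm_tri (t : ℕ) (β : k) (i n : Fin t) (h : (n : ℕ) < (i : ℕ)) : Sm k t β i n = 0 := by
  have h2 : ((X - C β) ^ (n : ℕ)).coeff (i : ℕ) = 0 :=
    coeff_eq_zero_of_natDegree_lt (by rw [natDegree_pow, natDegree_X_sub_C, mul_one]; exact h)
  simpa [Sm] using h2

lemma Sm_diag (t : ℕ) (β : k) (i : Fin t) : Sm k t β i i = 1 := by
  have h : ((X - C β) ^ (i : ℕ)).Monic := (monic_X_sub_C β).pow _
  have h2 := h.coeff_natDegree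
  rwa [natDegree_pow, natDegree_X_sub_C, mul_one] at h2

lemma Sm_det (t : ℕ) (β : k) : (Sm k t β).det = 1 := by
  rw [Matrix.det_of_upperTriangular (fun i j h => Sm_tri t β i j h)]
  simp [Sm_diag]

lemma A_mul_Sm (t : ℕ) (ht : 1 ≤ t) (β : k) (a : Fin t → k)
    (ha : ∀ j : Fin t, a j = -(((X - C β) ^ t).coeff (j : ℕ)))
    (A : Matrix (Fin t) (Fin t) k)
    (hA : ∀ i j : Fin t, A i j =
      if (i : ℕ) = (j : ℕ) + 1 then 1 else if (j : ℕ) = t - 1 then a i else 0) :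
    A * Sm k t β = Sm k t β * Jm k t β := by
  ext i n
  rw [mul_J_apply, Matrix.mul_apply]
  have key : ∀ j : Fin t, A i j * Sm k t β j n
      = (if (j : ℕ) + 1 = (i : ℕ) then Sm k t β j n else 0)
        + (if (j : ℕ) = t - 1 then a i * Sm k t β j n else 0) := by
    intro j
    rw [hA i j]
    split_ifs <;> first | ring1 | (exfalso; omega)
  rw [Finset.sum_congr rfl fun j _ => key j, Finset.sum_add_distrib, sum_deltaNat]
  rw [dif_pos (show t - 1 < t by omega)]
  have hsub : (∑ j : Fin t, if (j : ℕ) + 1 = (i : ℕ) then Sm k t β j n else 0)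
      = if h : 1 ≤ (i : ℕ) then
          Sm k t β ⟨(i : ℕ) - 1, Nat.lt_of_le_of_lt (Nat.sub_le _ _) i.isLt⟩ n else 0 := by
    by_cases h : 1 ≤ (i : ℕ)
    · rw [dif_pos h]
      have h2 : (∑ j : Fin t, if (j : ℕ) + 1 = (i : ℕ) then Sm k t β j n else 0)
          = ∑ j : Fin t, if (j : ℕ) = (i : ℕ) - 1 then Sm k t β j n else 0 :=
        Finset.sum_congr rfl fun j _ => if_congr (by omega) rfl rfl
      rw [h2, sum_deltaNat, dif_pos (Nat.lt_of_le_of_lt (Nat.sub_le _ _) i.isLt)]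
    · rw [dif_neg h]
      apply Finset.sum_eq_zero
      intro j _
      rw [if_neg]
      omega
  rw [hsub]
  -- now unfold Sm and finish by cases
  simp only [Sm, Matrix.of_apply]
  by_cases h2 : (n : ℕ) + 1 < t
  · rw [dif_pos h2]
    have hz : ((X - C β) ^ (n : ℕ)).coeff (t - 1) = 0 := by
      apply coeff_eq_zero_of_natDegree_lt
      rw [natDegree_pow, natDegree_X_sub_C, mul_one]
      omega
    rw [hz]
    have hstep := coeff_step (k := k) β (n : ℕ) (i : ℕ)
    by_cases h1 : 1 ≤ (i : ℕ)
    · rw [dif_pos h1, if_pos h1] at *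
      rw [hstep]
      ring1
    · rw [dif_neg h1, if_neg h1] at *
      rw [hstep]
      ring1
  · rw [dif_neg h2]
    have hn : (n : ℕ) = t - 1 := by omega
    have hlead : ((X - C β) ^ (n : ℕ)).coeff (t - 1) = 1 := by
      have h : ((X - C β) ^ (n : ℕ)).Monic := (monic_X_sub_C β).pow _
      have h3 := h.coeff_natDegree
      rw [hn]
      rwa [natDegree_pow, natDegree_X_sub_C, mul_one, hn] at h3
    rw [hlead, ha i]
    have htn : t = (n : ℕ) + 1 := by omega
    have hstep := coeff_step (k := k) β (n : ℕ) (i : ℕ)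
    rw [← htn] at hstep
    by_cases h1 : 1 ≤ (i : ℕ)
    · rw [dif_pos h1, if_pos h1] at *
      rw [hstep]
      ring1
    · rw [dif_neg h1, if_neg h1] at *
      rw [hstep]
      ring1

section Qblocks

variable (k)
variable (t : ℕ) (α β : k)

/-- top components of the long Jordan chain minus its last vector -/
def Q12m : Matrix (Fin t) (Fin (t + 1)) k :=
  Matrix.of fun i n => if (i : ℕ) = (n : ℕ) then 1 else 0

/-- bottom components of the long Jordan chain -/
def Q22m : Matrix (Fin t) (Fin (t + 1)) k :=
  Matrix.of fun i n =>
    if (i : ℕ) = (n : ℕ) then ((n : ℕ) : k) * α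
    else if (i : ℕ) + 1 = (n : ℕ) then ((n : ℕ) : k) * α * β else 0

/-- top components of the short Jordan chain -/
def Q11m : Matrix (Fin t) (Fin (t - 1)) k :=
  Matrix.of fun i j => if (i : ℕ) = (j : ℕ) + 1 then 1 else 0

/-- bottom components of the short Jordan chain -/
def Q21m : Matrix (Fin t) (Fin (t - 1)) k :=
  Matrix.of fun i j =>
    if (i : ℕ) = (j : ℕ) + 1 then ((j : ℕ) : k) * α
    else if (i : ℕ) = (j : ℕ) then -(((t - 1 - (j : ℕ) : ℕ)) : k) * α * β else 0

lemma eq1 : Jm k t β * Q11m k t = Q11m k t * Jm k (t - 1) β := by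
  ext i j
  rw [Jmul_apply, mul_J_apply]
  simp only [Q11m, Matrix.of_apply]
  split_ifs <;> first | ring1 | (exfalso; omega) | skip

lemma eq2 : Jm k t β * Q12m k t = Q12m k t * Jm k (t + 1) β := by
  ext i n
  rw [Jmul_apply, mul_J_apply]
  simp only [Q12m, Matrix.of_apply]
  split_ifs <;> first | ring1 | (exfalso; omega) | skip

lemma eq3 : α • (Jm k t β * Q11m k t) + Jm k t β * Q21m k t α β
    = Q21m k t α β * Jm k (t - 1) β := by
  ext i j
  simp only [Matrix.add_apply, Matrix.smul_apply, smul_eq_mul]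
  rw [Jmul_apply, Jmul_apply, mul_J_apply]
  simp only [Q11m, Q21m, Matrix.of_apply]
  split_ifs <;> first
    | ring1
    | (exfalso; omega)
    | (push_cast; ring1)
    | (have h1 : t - 1 - (j : ℕ) = (t - 1 - ((j : ℕ) + 1)) + 1 := by omega
       rw [h1]; push_cast; ring1)
    | (have h1 : t - 1 - (j : ℕ) = 1 := by omega
       rw [h1]; push_cast; ring1)

lemma eq4 : α • (Jm k t β * Q12m k t) + Jm k t β * Q22m k t α β
    = Q22m k t α β * Jm k (t + 1) β := by
  ext i n
  simp only [Matrix.add_apply, Matrix.smul_apply, smul_eq_mul]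
  rw [Jmul_apply, Jmul_apply, mul_J_apply]
  simp only [Q12m, Q22m, Matrix.of_apply]
  split_ifs <;> first
    | ring1
    | (exfalso; omega)
    | (push_cast; ring1)
    | (have h1 : (n : ℕ) = 0 := by omega
       rw [h1]; push_cast; ring1)

end Qblocks

section EquivPart

def invF (t : ℕ) : Fin t ⊕ Fin t → Fin (t - 1) ⊕ Fin (t + 1)
  | .inl n => .inr ⟨(n : ℕ), by omega⟩
  | .inr m => if h : (m : ℕ) = 0 then .inr ⟨t, by omega⟩ else .inl ⟨(m : ℕ) - 1, by omega⟩

def toF (t : ℕ) (ht : 1 ≤ t) : Fin (t - 1) ⊕ Fin (t + 1) → Fin t ⊕ Fin t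
  | .inl j => .inr ⟨(j : ℕ) + 1, by omega⟩
  | .inr n => if h : (n : ℕ) < t then .inl ⟨(n : ℕ), h⟩ else .inr ⟨0, ht⟩

def eEquiv (t : ℕ) (ht : 1 ≤ t) : (Fin (t - 1) ⊕ Fin (t + 1)) ≃ (Fin t ⊕ Fin t) where
  toFun := toF t ht
  invFun := invF t
  left_inv := by
    rintro (j | n)
    · simp only [toF, invF]
      rw [dif_neg (by simp)]
      simp [Fin.ext_iff]
    · simp only [toF]
      by_cases h : (n : ℕ) < t
      · rw [dif_pos h]
        simp only [invF]
        try simp [Fin.ext_iff]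
      · rw [dif_neg h]
        simp only [invF]
        have : (n : ℕ) = t := by omega
        simp [Fin.ext_iff, this]
  right_inv := by
    rintro (n | m)
    · simp only [invF, toF]
      rw [dif_pos n.isLt]
    · simp only [invF]
      by_cases h : (m : ℕ) = 0
      · rw [dif_pos h]
        simp only [toF]
        rw [dif_neg (by omega)]
        simp [Fin.ext_iff, h]
      · rw [dif_neg h]
        simp only [toF]
        simp [Fin.ext_iff]
        omega

end EquivPart

section DetPart

variable (k)
variable (t : ℕ) (α β : k)

def Bm : Matrix (Fin t) (Fin t) k :=
  Matrix.of fun i m => if 1 ≤ (m : ℕ) ∧ (i : ℕ) = (m : ℕ) then 1 else 0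

def Lm : Matrix (Fin t) (Fin t) k :=
  Matrix.of fun i n =>
    if (i : ℕ) = (n : ℕ) then ((n : ℕ) : k) * α
    else if (i : ℕ) + 1 = (n : ℕ) then ((n : ℕ) : k) * α * β else 0

def T0m : Matrix (Fin t) (Fin t) k :=
  Matrix.of fun i m =>
    if (m : ℕ) = 0 then (if (i : ℕ) + 1 = t then ((t : ℕ) : k) * α * β else 0)
    else if (i : ℕ) = (m : ℕ) then ((((m : ℕ) - 1 : ℕ)) : k) * α
    else if (i : ℕ) = (m : ℕ) - 1 then -(((t - (m : ℕ) : ℕ)) : k) * α * β else 0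

def Tm : Matrix (Fin t) (Fin t) k :=
  Matrix.of fun i m =>
    if (m : ℕ) = 0 then (if (i : ℕ) + 1 = t then ((t : ℕ) : k) * α * β else 0)
    else if (i : ℕ) = (m : ℕ) then -α
    else if (i : ℕ) = (m : ℕ) - 1 then -((t : ℕ) : k) * α * β else 0

lemma Qsub_eq :
    (fromBlocks (Q11m k t) (Q12m k t) (Q21m k t α β) (Q22m k t α β)).submatrix id (invF t)
      = fromBlocks 1 (Bm k t) (Lm k t α β) (T0m k t α β) := by
  ext i j
  cases i with
  | inl i =>
    cases j with
    | inl n =>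
      simp only [Matrix.submatrix_apply, id, invF, fromBlocks_apply₁₂, fromBlocks_apply₁₁,
        Q12m, Bm, Matrix.of_apply, Matrix.one_apply, Fin.ext_iff]
    | inr m =>
      by_cases hm : (m : ℕ) = 0
      · simp only [Matrix.submatrix_apply, id, invF, dif_pos hm, fromBlocks_apply₁₂,
          Q12m, Bm, Matrix.of_apply]
        rw [if_neg (by omega), if_neg (by omega)]
      · simp only [Matrix.submatrix_apply, id, invF, dif_neg hm, fromBlocks_apply₁₁,
          fromBlocks_apply₁₂, Q11m, Bm, Matrix.of_apply]
        exact if_congr (by omega) rfl rfl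
  | inr i =>
    cases j with
    | inl n =>
      simp only [Matrix.submatrix_apply, id, invF, fromBlocks_apply₂₂, fromBlocks_apply₂₁,
        Q22m, Lm, Matrix.of_apply]
    | inr m =>
      by_cases hm : (m : ℕ) = 0
      · simp only [Matrix.submatrix_apply, id, invF, dif_pos hm, fromBlocks_apply₂₂,
          T0m, Q22m, Matrix.of_apply]
        rw [if_pos hm, if_neg (by omega)]
      · simp only [Matrix.submatrix_apply, id, invF, dif_neg hm, fromBlocks_apply₂₁,
          fromBlocks_apply₂₂, T0m, Q21m, Matrix.of_apply]
        rw [if_neg hm]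
        have h3 : t - 1 - ((m : ℕ) - 1) = t - (m : ℕ) := by omega
        have h4 : ((m : ℕ) - 1) + 1 = (m : ℕ) := by omega
        rw [h3, h4]

lemma T_eq : T0m k t α β - Lm k t α β * Bm k t = Tm k t α β := by
  ext i m
  rw [Matrix.sub_apply, Matrix.mul_apply]
  have key : ∀ l : Fin t, Lm k t α β i l * Bm k t l m
      = if (l : ℕ) = (if 1 ≤ (m : ℕ) then (m : ℕ) else t) then Lm k t α β i l else 0 := by
    intro l
    simp only [Bm, Matrix.of_apply]
    split_ifs <;> first | ring1 | (exfalso; omega)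
  rw [Finset.sum_congr rfl fun l _ => key l, sum_deltaNat]
  by_cases hm : 1 ≤ (m : ℕ)
  · rw [if_pos hm] at *
    rw [dif_pos m.isLt]
    have hFe : (⟨(m : ℕ), m.isLt⟩ : Fin t) = m := rfl
    rw [hFe]
    simp only [T0m, Tm, Lm, Matrix.of_apply]
    split_ifs <;> first
      | ring1
      | (exfalso; omega)
      | (have hc : ((((m : ℕ) - 1 : ℕ)) : k) + 1 = ((m : ℕ) : k) := by
           exact_mod_cast congrArg (fun x : ℕ => (x : k))
             (show ((m : ℕ) - 1) + 1 = (m : ℕ) by omega)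
         linear_combination α * hc)
      | (have hc : (((t - (m : ℕ) : ℕ)) : k) + ((m : ℕ) : k) = ((t : ℕ) : k) := by
           exact_mod_cast congrArg (fun x : ℕ => (x : k))
             (show (t - (m : ℕ)) + (m : ℕ) = t by omega)
         linear_combination (-(α * β)) * hc)
  · rw [if_neg hm] at *
    rw [dif_neg (lt_irrefl t)]
    have hm0 : (m : ℕ) = 0 := by omega
    simp only [T0m, Tm, Matrix.of_apply, if_pos hm0]
    ring1

lemma val_finRotate (ht : 1 ≤ t) (m : Fin t) :
    ((finRotate t m : Fin t) : ℕ) = if (m : ℕ) + 1 = t then 0 else (m : ℕ) + 1 := by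
  obtain ⟨t', rfl⟩ : ∃ t', t = t' + 1 := ⟨t - 1, by omega⟩
  rw [finRotate_succ_apply, Fin.val_add_one]
  split_ifs with h1 h2 h3 <;> first
    | rfl
    | (exfalso; rw [Fin.ext_iff, Fin.val_last] at *; omega)

lemma Tm_det_unit (ht : 1 ≤ t) (hα : α ≠ 0) (hβ : β ≠ 0) (htk : ((t : ℕ) : k) ≠ 0) :
    IsUnit (Tm k t α β).det := by
  rw [isUnit_iff_ne_zero]
  have hperm := Matrix.det_permute' (finRotate t) (Tm k t α β)
  have htri : ((Tm k t α β).submatrix id ⇑(finRotate t)).det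
      = ∏ m : Fin t, ((Tm k t α β).submatrix id ⇑(finRotate t)) m m := by
    apply Matrix.det_of_lowerTriangular
    intro i j hij
    have hij' : (i : ℕ) < (j : ℕ) := hij
    simp only [Matrix.submatrix_apply, id, Tm, Matrix.of_apply]
    rw [val_finRotate t ht j]
    split_ifs <;> first | rfl | (exfalso; omega)
  have hdiag : (∏ m : Fin t, ((Tm k t α β).submatrix id ⇑(finRotate t)) m m) ≠ 0 := by
    rw [Finset.prod_ne_zero_iff]
    intro m _
    simp only [Matrix.submatrix_apply, id, Tm, Matrix.of_apply]
    rw [val_finRotate t ht m]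
    by_cases h : (m : ℕ) + 1 = t
    · rw [if_pos h, if_pos rfl, if_pos h]
      exact mul_ne_zero (mul_ne_zero htk hα) hβ
    · rw [if_neg h, if_neg (by omega), if_neg (by omega), if_pos (by omega)]
      exact mul_ne_zero (mul_ne_zero (neg_ne_zero.mpr htk) hα) hβ
  intro hdet
  rw [hperm, hdet, mul_zero] at htri
  exact hdiag htri.symm

end DetPart

lemma eEquiv_symm_coe (t : ℕ) (ht : 1 ≤ t) : ⇑(eEquiv t ht).symm = invF t := rfl

end Stmt8Aux

/-- Let `A` be the `t×t` companion matrix of `(y − β)^t` and `C = [[A,0],[αA,A]]` (2t×2t),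
with `α, β ≠ 0` over an algebraically closed field of characteristic zero. Then `C` is
similar to `J_{t-1}(β) ⊕ J_{t+1}(β)`. -/
theorem stmt_8 (k : Type*) [Field k] [IsAlgClosed k] [CharZero k]
    (t : ℕ) (ht : 1 ≤ t) (β : k) (hβ : β ≠ 0) (α : k) (hα0 : α ≠ 0)
    (a : Fin t → k) (ha : ∀ j : Fin t, a j = -(((X - C β) ^ t).coeff j))
    (A : Matrix (Fin t) (Fin t) k)
    (hA : ∀ i j : Fin t, A i j =
      if (i : ℕ) = (j : ℕ) + 1 then 1 else if (j : ℕ) = t - 1 then a i else 0)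
    (J₁ : Matrix (Fin (t - 1)) (Fin (t - 1)) k)
    (hJ₁ : ∀ i j, J₁ i j = if i = j then β else if (i : ℕ) = (j : ℕ) + 1 then 1 else 0)
    (J₂ : Matrix (Fin (t + 1)) (Fin (t + 1)) k)
    (hJ₂ : ∀ i j, J₂ i j = if i = j then β else if (i : ℕ) = (j : ℕ) + 1 then 1 else 0) :
    ∃ (e : (Fin (t - 1) ⊕ Fin (t + 1)) ≃ (Fin t ⊕ Fin t))
      (P : Matrix (Fin t ⊕ Fin t) (Fin t ⊕ Fin t) k), IsUnit P.det ∧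
        fromBlocks A 0 (α • A) A * P
          = P * (Matrix.reindex e e (fromBlocks J₁ 0 0 J₂)) := by
  classical
  have hJ1 : J₁ = Stmt8Aux.Jm k (t - 1) β := by ext i j; rw [hJ₁]; rfl
  have hJ2 : J₂ = Stmt8Aux.Jm k (t + 1) β := by ext i j; rw [hJ₂]; rfl
  set S : Matrix (Fin t) (Fin t) k := Stmt8Aux.Sm k t β with hS
  set Q0 : Matrix (Fin t ⊕ Fin t) (Fin (t - 1) ⊕ Fin (t + 1)) k :=
    fromBlocks (Stmt8Aux.Q11m k t) (Stmt8Aux.Q12m k t) (Stmt8Aux.Q21m k t α β) (Stmt8Aux.Q22m k t α β) with hQ0def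
  set Qs : Matrix (Fin t ⊕ Fin t) (Fin t ⊕ Fin t) k := Q0.submatrix id (Stmt8Aux.invF t) with hQs
  refine ⟨Stmt8Aux.eEquiv t ht, fromBlocks S 0 0 S * Qs, ?_, ?_⟩
  · -- determinant
    rw [Matrix.det_mul, Matrix.det_fromBlocks_zero₁₂, hS, Stmt8Aux.Sm_det, one_mul, one_mul]
    rw [hQs, hQ0def, Stmt8Aux.Qsub_eq, Matrix.det_fromBlocks_one₁₁, Stmt8Aux.T_eq]
    exact Stmt8Aux.Tm_det_unit k t α β ht hα0 hβ (Nat.cast_ne_zero.mpr (by omega))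
  · -- the intertwining identity
    have hAS := Stmt8Aux.A_mul_Sm t ht β a ha A hA
    have hCS : fromBlocks A 0 (α • A) A * fromBlocks S 0 0 S
        = fromBlocks S 0 0 S * fromBlocks (Stmt8Aux.Jm k t β) 0 (α • Stmt8Aux.Jm k t β) (Stmt8Aux.Jm k t β) := by
      rw [fromBlocks_multiply, fromBlocks_multiply]
      simp only [Matrix.zero_mul, Matrix.mul_zero, smul_zero, add_zero, zero_add,
        Matrix.smul_mul, Matrix.mul_smul]
      rw [hS, hAS]
    have hDQ : fromBlocks (Stmt8Aux.Jm k t β) 0 (α • Stmt8Aux.Jm k t β) (Stmt8Aux.Jm k t β) * Q0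
        = Q0 * fromBlocks (Stmt8Aux.Jm k (t - 1) β) 0 0 (Stmt8Aux.Jm k (t + 1) β) := by
      have h1 := Stmt8Aux.eq1 k t β
      have h2 := Stmt8Aux.eq2 k t β
      have h3 := Stmt8Aux.eq3 k t α β
      have h4 := Stmt8Aux.eq4 k t α β
      rw [hQ0def, fromBlocks_multiply, fromBlocks_multiply]
      simp only [Matrix.zero_mul, Matrix.mul_zero, add_zero, zero_add, Matrix.smul_mul]
      rw [h3, h4, h1, h2]
    have hsub1 : fromBlocks (Stmt8Aux.Jm k t β) 0 (α • Stmt8Aux.Jm k t β) (Stmt8Aux.Jm k t β) * Qs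
        = (fromBlocks (Stmt8Aux.Jm k t β) 0 (α • Stmt8Aux.Jm k t β) (Stmt8Aux.Jm k t β) * Q0).submatrix id (Stmt8Aux.invF t) := by
      have := Matrix.submatrix_mul_equiv
        (fromBlocks (Stmt8Aux.Jm k t β) 0 (α • Stmt8Aux.Jm k t β) (Stmt8Aux.Jm k t β)) Q0
        id (Equiv.refl (Fin t ⊕ Fin t)) (Stmt8Aux.invF t)
      simpa [hQs] using this
    have hsub2 : (Q0 * fromBlocks (Stmt8Aux.Jm k (t - 1) β) 0 0 (Stmt8Aux.Jm k (t + 1) β)).submatrix id (Stmt8Aux.invF t)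
        = Qs * (fromBlocks (Stmt8Aux.Jm k (t - 1) β) 0 0 (Stmt8Aux.Jm k (t + 1) β)).submatrix
            (Stmt8Aux.invF t) (Stmt8Aux.invF t) := by
      have := Matrix.submatrix_mul_equiv
        Q0 (fromBlocks (Stmt8Aux.Jm k (t - 1) β) 0 0 (Stmt8Aux.Jm k (t + 1) β))
        id (Stmt8Aux.eEquiv t ht).symm (⇑(Stmt8Aux.eEquiv t ht).symm)
      rw [Stmt8Aux.eEquiv_symm_coe] at this
      rw [← this, hQs]
    rw [hJ1, hJ2, Matrix.reindex_apply, Stmt8Aux.eEquiv_symm_coe]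
    rw [← Matrix.mul_assoc, hCS, Matrix.mul_assoc, hsub1, hDQ, hsub2, Matrix.mul_assoc]
end

section
/- Let k be an algebraically closed field of characteristic zero, s' ≥ 2, ξ ∈ k a primitive s'-th root of unity, and let θ, η ∈ k^× and c ∈ k^×. For 1 ≤ i, j ≤ s' set α_{ij} = θ c ξ^{i-1} + η ξ^{j-1}. Then: (1) α_{ij}^{s'} = α_{mn}^{s'} whenever j − i ≡ n − m (mod s'); (2) the elements α_{11}, α_{12}, …, α_{1s'} are pairwise distinct; (3) if η^{s'} + (−1)^{s'+1} θ^{s'} c^{s'} = 0, then there exists a unique j_0 with 1 ≤ j_0 ≤ s' such that α_{1 j_0} = 0. -/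
/-- For `ξ` a primitive `s'`-th root of unity (`s' ≥ 2`), `θ, η, c ∈ k^×`, and
`α_{ij} = θcξ^{i-1} + ηξ^{j-1}` (`1 ≤ i, j ≤ s'`):
(1) `α_{ij}^{s'} = α_{mn}^{s'}` whenever `j − i ≡ n − m (mod s')`;
(2) `α_{11}, …, α_{1s'}` are pairwise distinct;
(3) if `η^{s'} + (−1)^{s'+1} θ^{s'} c^{s'} = 0` then there is a unique `1 ≤ j₀ ≤ s'`
with `α_{1j₀} = 0`. -/
theorem stmt_12 (k : Type*) [Field k] [IsAlgClosed k] [CharZero k]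
    (s' : ℕ) (hs' : 2 ≤ s') (ξ : k) (hξ : IsPrimitiveRoot ξ s')
    (θ η c : k) (hθ : θ ≠ 0) (hη : η ≠ 0) (hc : c ≠ 0)
    (a : ℕ → ℕ → k) (ha : ∀ i j, a i j = θ * c * ξ ^ (i - 1) + η * ξ ^ (j - 1)) :
    (∀ i j m n : ℕ, 1 ≤ i → i ≤ s' → 1 ≤ j → j ≤ s' → 1 ≤ m → m ≤ s' → 1 ≤ n → n ≤ s' →
        (j + m) ≡ (n + i) [MOD s'] → a i j ^ s' = a m n ^ s') ∧
    (∀ j j' : ℕ, 1 ≤ j → j ≤ s' → 1 ≤ j' → j' ≤ s' → a 1 j = a 1 j' → j = j') ∧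
    (η ^ s' + (-1 : k) ^ (s' + 1) * θ ^ s' * c ^ s' = 0 →
      ∃! j₀ : ℕ, (1 ≤ j₀ ∧ j₀ ≤ s') ∧ a 1 j₀ = 0) := by
  have hone : ξ ^ s' = 1 := hξ.pow_eq_one
  -- key normalization lemma
  have key : ∀ i j : ℕ, 1 ≤ i → i ≤ s' → 1 ≤ j →
      a i j ^ s' = (θ * c + η * ξ ^ (j + s' - i)) ^ s' := by
    intro i j hi1 hi2 hj1
    have hpow : ξ ^ (i - 1) * ξ ^ (j + s' - i) = ξ ^ (j - 1) := by
      rw [← pow_add]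
      have e : (i - 1) + (j + s' - i) = (j - 1) + s' := by omega
      rw [e, pow_add, hone, mul_one]
    have e2 : θ * c * ξ ^ (i - 1) + η * ξ ^ (j - 1)
        = ξ ^ (i - 1) * (θ * c + η * ξ ^ (j + s' - i)) := by
      rw [← hpow]; ring
    rw [ha, e2, mul_pow, ← pow_mul, mul_comm (i - 1) s', pow_mul, hone, one_pow, one_mul]
  have h2 : ∀ j j' : ℕ, 1 ≤ j → j ≤ s' → 1 ≤ j' → j' ≤ s' → a 1 j = a 1 j' → j = j' := by
    intro j j' hj1 hj2 hj'1 hj'2 hEq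
    rw [ha, ha] at hEq
    have hpows : ξ ^ (j - 1) = ξ ^ (j' - 1) := by
      have := add_left_cancel hEq
      exact mul_left_cancel₀ hη this
    have := hξ.pow_inj (by omega : j - 1 < s') (by omega : j' - 1 < s') hpows
    omega
  refine ⟨?_, h2, ?_⟩
  · intro i j m n hi1 hi2 hj1 hj2 hm1 hm2 hn1 hn2 hmod
    rw [key i j hi1 hi2 hj1, key m n hm1 hm2 hn1]
    have hper : ∀ d : ℕ, ξ ^ d = ξ ^ (d % s') := by
      intro d
      conv_lhs => rw [← Nat.div_add_mod d s']
      rw [pow_add, pow_mul, hone, one_pow, one_mul]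
    have hexp : ξ ^ (j + s' - i) = ξ ^ (n + s' - m) := by
      rw [hper (j + s' - i), hper (n + s' - m)]
      congr 1
      have h1 : (j + s' - i) + (i + m) ≡ (n + s' - m) + (i + m) [MOD s'] := by
        have e1 : (j + s' - i) + (i + m) = (j + m) + s' := by omega
        have e2 : (n + s' - m) + (i + m) = (n + i) + s' := by omega
        rw [e1, e2]; exact hmod.add_right s'
      exact Nat.ModEq.add_right_cancel' (i + m) h1
    rw [hexp]
  · intro h
    haveI : NeZero s' := ⟨by omega⟩
    rw [pow_succ] at h
    have hη' : η ^ s' = (-1 : k) ^ s' * θ ^ s' * c ^ s' := by linear_combination h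
    have hx : (-(θ * c) / η) ^ s' = 1 := by
      rw [div_pow, neg_pow, mul_pow, hη']
      field_simp
    obtain ⟨r, hr, hxr⟩ := hξ.eq_pow_of_pow_eq_one hx
    have hroot : a 1 (r + 1) = 0 := by
      rw [ha]
      simp only [Nat.sub_self, pow_zero, mul_one, Nat.add_sub_cancel, hxr]
      field_simp
      ring
    refine ⟨r + 1, ⟨⟨by omega, by omega⟩, hroot⟩, ?_⟩
    rintro y ⟨⟨hy1, hy2⟩, hy0⟩
    exact h2 y (r + 1) hy1 hy2 (by omega) (by omega) (by rw [hy0, hroot])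
end
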